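/- arXiv:1905.01915 — 2 statements merged into one kernel-verified Lean document; each statement's English description precedes it below -/
import Mathlib

section
/- (Hilbert–Mumford criterion for abelian groups acting linearly) Let A = exp(𝔞) with 𝔞 an abelian algebra of symmetric endomorphisms of V, and let x ∈ V. If u ∈ closure(A·x), then there exist ξ ∈ 𝔞 and a ∈ A such that lim_{t→+∞} exp(tξ)·(a x) = u. -/
/-!
Diagonalise `𝔞` simultaneously: in a common eigenbasis `b`, each `ξ ∈ 𝔞` acts on the `i`-th
coordinate by a scalar `w i ξ` depending linearly on `ξ`, so `exp ξ` multiplies it by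
`e ^ (w i ξ)`. If `e ^ (w i ξₙ) xᵢ → uᵢ`, the weights `w i ξₙ` converge on the coordinates with
`uᵢ ≠ 0` and tend to `-∞` on those with `xᵢ ≠ 0 = uᵢ`. The limit of the first family is attained
by some `η`, since the range of a linear map into `ℝ^k` is closed; correcting `ξₙ` by a bounded
element with the same first weights gives, for large `n`, a `ζ` on which the first weights vanish
and the second ones are negative. Then `exp (t ζ) (exp η x) → u`.
-/

open RealInnerProductSpace Filter Topology Module

theorem NormedSpace.exp_apply_of_apply_eq_smul {E : Type*} [NormedAddCommGroup E]
    [NormedSpace ℝ E] [CompleteSpace E] {A : E →L[ℝ] E} {v : E} {c : ℝ} (h : A v = c • v) :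
    NormedSpace.exp A v = Real.exp c • v := by
  have hpow : ∀ n : ℕ, (A ^ n) v = c ^ n • v := by
    intro n
    induction n with
    | zero => simp
    | succ n ih =>
      rw [pow_succ', ContinuousLinearMap.mul_def, ContinuousLinearMap.comp_apply, ih, map_smul, h,
        smul_smul, pow_succ]
  have hA := (NormedSpace.exp_series_hasSum_exp' (𝕂 := ℝ) A).mapL
    (ContinuousLinearMap.apply ℝ E v)
  have hc := (NormedSpace.exp_series_hasSum_exp' (𝕂 := ℝ) c).smul_const v
  rw [Real.exp_eq_exp_ℝ]
  refine hA.unique (hc.congr_fun fun n => ?_)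
  simp [hpow, smul_smul]

theorem Module.Basis.tendsto_nhds_iff_forall_repr {𝕜 E ι α : Type*} [NontriviallyNormedField 𝕜]
    [CompleteSpace 𝕜] [AddCommGroup E] [Module 𝕜 E] [TopologicalSpace E]
    [IsTopologicalAddGroup E] [ContinuousSMul 𝕜 E] [T2Space E] [Finite ι] (b : Basis ι 𝕜 E)
    {f : α → E} {l : Filter α} {u : E} :
    Tendsto f l (𝓝 u) ↔ ∀ i, Tendsto (fun a => b.repr (f a) i) l (𝓝 (b.repr u i)) := by
  rw [← tendsto_pi_nhds]
  exact b.equivFunL.toHomeomorph.isInducing.tendsto_nhds_iff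

theorem Module.Basis.repr_apply_eq_mul_of_apply_eq_smul {R M ι : Type*} [CommSemiring R]
    [AddCommMonoid M] [Module R M] (b : Basis ι R M) {T : M →ₗ[R] M} {d : ι → R}
    (h : ∀ j, T (b j) = d j • b j) (v : M) (i : ι) :
    b.repr (T v) i = d i * b.repr v i := by
  classical
  have hcoord : (b.coord i).comp T = d i • b.coord i := b.ext fun j => by
    simp only [LinearMap.comp_apply, h, map_smul, LinearMap.smul_apply, Basis.coord_apply,
      Basis.repr_self, Finsupp.single_apply, smul_eq_mul]
    split_ifs with hij <;> simp [hij]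
  exact LinearMap.congr_fun hcoord v

theorem LinearMap.IsSymmetric.exists_basis_forall_apply_eq_smul_of_pairwise_commute
    {𝕜 E n : Type*} [RCLike 𝕜] [NormedAddCommGroup E] [InnerProductSpace 𝕜 E]
    [FiniteDimensional 𝕜 E] {T : n → Module.End 𝕜 E} (hT : ∀ i, (T i).IsSymmetric)
    (hC : Pairwise (Function.onFun Commute T)) :
    ∃ b : Basis (Fin (finrank 𝕜 E)) 𝕜 E, ∀ i j, ∃ c : 𝕜, T i (b j) = c • b j := by
  classical
  have hint := directSum_isInternal_of_pairwise_commute hT hC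
  let b := hint.collectedBasis fun χ => finBasis 𝕜 _
  refine ⟨b.reindex (b.indexEquiv (finBasis 𝕜 E)), fun i j => ?_⟩
  have hmem := hint.collectedBasis_mem (fun χ => finBasis 𝕜 _)
    ((b.indexEquiv (finBasis 𝕜 E)).symm j)
  rw [Submodule.mem_iInf] at hmem
  rw [Basis.reindex_apply]
  exact ⟨_, Module.End.mem_eigenspace_iff.mp (hmem i)⟩

theorem exists_basis_apply_eq_weight_smul {𝕜 E : Type*} [RCLike 𝕜] [NormedAddCommGroup E]
    [InnerProductSpace 𝕜 E] [FiniteDimensional 𝕜 E] (𝔞 : Submodule 𝕜 (E →L[𝕜] E))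
    (hsym : ∀ ξ : 𝔞, ((ξ : E →L[𝕜] E) : E →ₗ[𝕜] E).IsSymmetric)
    (habelian : ∀ ξ η : 𝔞, (ξ : E →L[𝕜] E) * η = (η : E →L[𝕜] E) * ξ) :
    ∃ (b : Basis (Fin (finrank 𝕜 E)) 𝕜 E) (w : Fin (finrank 𝕜 E) → 𝔞 →ₗ[𝕜] 𝕜),
      ∀ (ξ : 𝔞) i, (ξ : E →L[𝕜] E) (b i) = w i ξ • b i := by
  obtain ⟨b, hb⟩ := LinearMap.IsSymmetric.exists_basis_forall_apply_eq_smul_of_pairwise_commute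
    (T := fun ξ : 𝔞 => ((ξ : E →L[𝕜] E) : E →ₗ[𝕜] E)) hsym
    fun ξ η _ => congrArg ContinuousLinearMap.toLinearMap (habelian ξ η)
  refine ⟨b, fun i => (b.coord i).comp
    ((ContinuousLinearMap.apply 𝕜 E (b i)).toLinearMap.comp 𝔞.subtype), fun ξ i => ?_⟩
  obtain ⟨c, hc⟩ := hb ξ i
  change (ξ : E →L[𝕜] E) (b i) = c • b i at hc
  simp [hc]

section ExpMul

variable {α : Type*} {l : Filter α} {s : α → ℝ} {a b : ℝ}

theorem ne_zero_of_tendsto_exp_mul [l.NeBot] (h : Tendsto (fun n => Real.exp (s n) * a) l (𝓝 b))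
    (hb : b ≠ 0) : a ≠ 0 := by
  rintro rfl
  exact hb (tendsto_nhds_unique h (by simp))

theorem tendsto_exp_of_tendsto_exp_mul (h : Tendsto (fun n => Real.exp (s n) * a) l (𝓝 b))
    (ha : a ≠ 0) : Tendsto (fun n => Real.exp (s n)) l (𝓝 (b / a)) :=
  (h.div_const a).congr fun _ => mul_div_cancel_right₀ _ ha

theorem div_pos_of_tendsto_exp_mul [l.NeBot] (h : Tendsto (fun n => Real.exp (s n) * a) l (𝓝 b))
    (hb : b ≠ 0) : 0 < b / a :=
  have ha := ne_zero_of_tendsto_exp_mul h hb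
  (ge_of_tendsto' (tendsto_exp_of_tendsto_exp_mul h ha) fun _ => (Real.exp_pos _).le).lt_of_ne
    (div_ne_zero hb ha).symm

theorem tendsto_log_div_of_tendsto_exp_mul [l.NeBot]
    (h : Tendsto (fun n => Real.exp (s n) * a) l (𝓝 b)) (hb : b ≠ 0) :
    Tendsto s l (𝓝 (Real.log (b / a))) := by
  have hexp := tendsto_exp_of_tendsto_exp_mul h (ne_zero_of_tendsto_exp_mul h hb)
  simpa [Function.comp_def] using
    (Real.continuousAt_log (div_pos_of_tendsto_exp_mul h hb).ne').tendsto.comp hexp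

theorem tendsto_atBot_of_tendsto_exp_mul (h : Tendsto (fun n => Real.exp (s n) * a) l (𝓝 0))
    (ha : a ≠ 0) : Tendsto s l atBot :=
  Real.tendsto_exp_comp_nhds_zero.mp (by simpa using tendsto_exp_of_tendsto_exp_mul h ha)

end ExpMul

section LinearForms

variable {E ι κ α : Type*} [AddCommGroup E] [Module ℝ E] [Finite ι] {l : Filter α} [l.NeBot]
  (f : ι → E →ₗ[ℝ] ℝ) {ξ : α → E} {ℓ : ι → ℝ}

theorem exists_forall_apply_eq_of_tendsto (h : ∀ i, Tendsto (fun n => f i (ξ n)) l (𝓝 (ℓ i))) :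
    ∃ η, ∀ i, f i η = ℓ i := by
  obtain ⟨η, hη⟩ :=
    (LinearMap.range (LinearMap.pi f)).closed_of_finiteDimensional.mem_of_tendsto
      (tendsto_pi_nhds.mpr h) (Eventually.of_forall fun n => LinearMap.mem_range_self _ (ξ n))
  exact ⟨η, fun i => congrFun hη i⟩

theorem exists_forall_apply_eq_zero_and_neg_of_tendsto_atBot [Finite κ] (g : κ → E →ₗ[ℝ] ℝ)
    (hf : ∀ i, Tendsto (fun n => f i (ξ n)) l (𝓝 (ℓ i)))
    (hg : ∀ k, Tendsto (fun n => g k (ξ n)) l atBot) :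
    ∃ ζ, (∀ i, f i ζ = 0) ∧ ∀ k, g k ζ < 0 := by
  set Φ := LinearMap.pi f
  obtain ⟨σ, hσ⟩ := Φ.rangeRestrict.exists_rightInverse_of_surjective Φ.range_rangeRestrict
  obtain ⟨η, hη⟩ := exists_forall_apply_eq_of_tendsto f hf
  have hΦ : Tendsto (fun n => Φ.rangeRestrict (ξ n)) l (𝓝 (Φ.rangeRestrict η)) := by
    refine tendsto_subtype_rng.mpr (tendsto_pi_nhds.mpr fun i => ?_)
    simpa [Φ, hη] using hf i
  have hlim : ∀ k, Tendsto (fun n => g k (ξ n - σ (Φ.rangeRestrict (ξ n)))) l atBot := fun k => by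
    have hσ_cont := ((g k).comp σ).continuous_of_finiteDimensional
    simpa [sub_eq_add_neg] using (hg k).atBot_add ((hσ_cont.tendsto _).comp hΦ).neg
  obtain ⟨n, hn⟩ := (eventually_all.mpr fun k => (hlim k).eventually_lt_atBot 0).exists
  refine ⟨ξ n - σ (Φ.rangeRestrict (ξ n)), fun i => ?_, hn⟩
  have hσn := congrArg Subtype.val (LinearMap.congr_fun hσ (Φ.rangeRestrict (ξ n)))
  simpa [Φ, sub_eq_zero] using (congrFun hσn i).symm

end LinearForms

theorem exists_tendsto_exp_smul_add_mul_of_tendsto_exp_mul {E ι α : Type*} [AddCommGroup E]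
    [Module ℝ E] [Finite ι] {l : Filter α} [l.NeBot] (w : ι → E →ₗ[ℝ] ℝ) {ξ : α → E}
    {a b : ι → ℝ} (h : ∀ i, Tendsto (fun n => Real.exp (w i (ξ n)) * a i) l (𝓝 (b i))) :
    ∃ ζ η : E, ∀ i, Tendsto (fun t : ℝ => Real.exp (w i (t • ζ + η)) * a i) atTop (𝓝 (b i)) := by
  have hlog (i : {i // b i ≠ 0}) := tendsto_log_div_of_tendsto_exp_mul (h i) i.2
  obtain ⟨η, hη⟩ := exists_forall_apply_eq_of_tendsto (fun i : {i // b i ≠ 0} => w i) hlog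
  obtain ⟨ζ, hζ, hζ_neg⟩ := exists_forall_apply_eq_zero_and_neg_of_tendsto_atBot
    (fun i : {i // b i ≠ 0} => w i) (fun k : {k // a k ≠ 0 ∧ b k = 0} => w k) hlog
    fun k => tendsto_atBot_of_tendsto_exp_mul (by simpa [k.2.2] using h k) k.2.1
  refine ⟨ζ, η, fun i => ?_⟩
  by_cases hb : b i = 0
  · by_cases ha : a i = 0
    · simp [ha, hb]
    have hlin : Tendsto (fun t : ℝ => w i (t • ζ + η)) atTop atBot := by
      simpa using tendsto_atBot_add_const_right _ (w i η)
        (tendsto_id.atTop_mul_const_of_neg (hζ_neg ⟨i, ha, hb⟩))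
    simpa [hb] using (Real.tendsto_exp_atBot.comp hlin).mul_const (a i)
  · have hconst (t : ℝ) : Real.exp (w i (t • ζ + η)) * a i = b i := by
      rw [map_add, map_smul, hζ ⟨i, hb⟩, hη ⟨i, hb⟩, smul_zero, zero_add,
        Real.exp_log (div_pos_of_tendsto_exp_mul (h i) hb),
        div_mul_cancel₀ _ (ne_zero_of_tendsto_exp_mul (h i) hb)]
    simp only [hconst, tendsto_const_nhds]

/-- Hilbert-Mumford criterion for abelian groups acting linearly: every point of the closure of
an orbit `A·x` is reached as the limit of a one-parameter subgroup applied to a point of the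
orbit. -/
theorem hilbert_mumford_abelian
    (V : Type*) [NormedAddCommGroup V] [InnerProductSpace ℝ V] [FiniteDimensional ℝ V]
    (𝔞 : Submodule ℝ (V →L[ℝ] V))
    (hsym : ∀ ξ : 𝔞, ∀ v w : V, ⟪(ξ : V →L[ℝ] V) v, w⟫ = ⟪v, (ξ : V →L[ℝ] V) w⟫)
    (habelian : ∀ ξ η : 𝔞, (ξ : V →L[ℝ] V) * η = (η : V →L[ℝ] V) * ξ)
    (x u : V)
    (hu : u ∈ closure {y : V | ∃ ξ : 𝔞, y = NormedSpace.exp (ξ : V →L[ℝ] V) x}) :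
    ∃ (ξ η : 𝔞), Tendsto
      (fun t : ℝ => NormedSpace.exp (t • (ξ : V →L[ℝ] V))
        (NormedSpace.exp (η : V →L[ℝ] V) x)) atTop (nhds u) := by
  obtain ⟨y, hy, hyu⟩ := mem_closure_iff_seq_limit.mp hu
  choose ξ hξ using hy
  obtain ⟨b, w, hw⟩ := exists_basis_apply_eq_weight_smul 𝔞 hsym habelian
  have hrepr (ξ : 𝔞) (v : V) (i) :
      b.repr (NormedSpace.exp (ξ : V →L[ℝ] V) v) i = Real.exp (w i ξ) * b.repr v i :=
    b.repr_apply_eq_mul_of_apply_eq_smul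
      (T := (NormedSpace.exp (ξ : V →L[ℝ] V) : V →L[ℝ] V))
      (fun j => NormedSpace.exp_apply_of_apply_eq_smul (hw ξ j)) v i
  obtain ⟨ζ, η, hlim⟩ := exists_tendsto_exp_smul_add_mul_of_tendsto_exp_mul w
    fun i => by simpa [hξ, hrepr] using b.tendsto_nhds_iff_forall_repr.mp hyu i
  refine ⟨ζ, η, b.tendsto_nhds_iff_forall_repr.mpr fun i => (hlim i).congr fun t => ?_⟩
  rw [show t • (ζ : V →L[ℝ] V) = ((t • ζ : 𝔞) : V →L[ℝ] V) from rfl, hrepr, hrepr, map_add,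
    Real.exp_add, mul_assoc]
end

section
/- Let A = exp(𝔞) with 𝔞 abelian in Sym(V), acting linearly on V with weights α_1,...,α_n relative to an orthonormal eigenbasis, and let x ∈ V with support I. Then the orbit A·x is closed in V if and only if 0 ∈ C^o_I = {∑_{i∈I} s_i α_i : s_i > 0}; equivalently, A·x is closed if and only if A·x meets the zero set of the gradient map μ_𝔞. -/
open RealInnerProductSpace Finset Classical NormedSpace Filter Topology

/-!
In the eigenbasis `v` every `exp ξ` acts diagonally, `⟪exp ξ y, v i⟫ = e^{α_i(ξ)} ⟪y, v i⟫`, so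
`‖exp (t • ξ) y‖² = ∑ᵢ e^{2 t α_i(ξ)} ⟪y, v i⟫²`, whose derivative at `t = 0` is `2 μ_𝔞(y)(ξ)`.

* A closed orbit contains a point of minimal norm, where this derivative vanishes.
* If `μ_𝔞(y) = 0` for `y = exp η x`, then `s_i = ⟪y, v i⟫²` exhibits `0 ∈ C°_I`.
* If `∑_{i ∈ I} s_i α_i = 0` with all `s_i > 0`, a limit of points `exp ξ_k x` cannot lose a
  coordinate in `I`: `e^{α_i(ξ_k)} → 0` would force `α_i(ξ_k) → -∞`, while the other
  `α_j(ξ_k)` stay bounded above. So `(α_i(ξ_k))_{i ∈ I}` converges, its limit lies in the closed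
  subspace `{(α_i(ξ))_{i ∈ I} | ξ ∈ 𝔞}`, and the limit point is in the orbit.
-/

theorem exp_apply_eq_smul_of_apply_eq_smul {V : Type*} [NormedAddCommGroup V] [NormedSpace ℝ V]
    [CompleteSpace V] {T : V →L[ℝ] V} {w : V} {c : ℝ} (h : T w = c • w) :
    exp T w = Real.exp c • w := by
  have hpow : ∀ k : ℕ, (T ^ k) w = c ^ k • w := fun k => by
    induction k with
    | zero => simp
    | succ k ih => simp [pow_succ', ih, h, smul_smul, mul_comm]
  have hT := (exp_series_hasSum_exp' (𝕂 := ℝ) T).mapL (ContinuousLinearMap.apply ℝ V w)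
  have hc := (exp_series_hasSum_exp' (𝕂 := ℝ) c).smul_const w
  rw [← Real.exp_eq_exp_ℝ] at hc
  refine hT.unique ?_
  simpa [hpow, smul_smul] using hc

theorem hasDerivAt_sum_sq_exp_mul {ι : Type*} [Fintype ι] (a b : ι → ℝ) :
    HasDerivAt (fun t => ∑ i, (Real.exp (t * a i) * b i) ^ 2) (2 * ∑ i, a i * b i ^ 2) 0 := by
  rw [mul_sum]
  refine HasDerivAt.fun_sum fun i _ => ?_
  exact (((hasDerivAt_mul_const (a i)).exp.mul_const (b i)).fun_pow 2).congr_deriv (by simp; ring)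

theorem Real.pos_of_tendsto_exp_of_sum_mul_eq_zero {ι : Type*} {I : Finset ι} {s : ι → ℝ}
    (hs : ∀ i ∈ I, 0 < s i) {w : ℕ → ι → ℝ} (hw : ∀ k, ∑ i ∈ I, s i * w k i = 0) {p : ι → ℝ}
    (hp : ∀ i ∈ I, Tendsto (fun k => Real.exp (w k i)) atTop (𝓝 (p i))) {i : ι} (hi : i ∈ I) :
    0 < p i := by
  have hbdd : ∀ j ∈ I, ∃ C, ∀ k, w k j ≤ C := fun j hj => by
    obtain ⟨M, hM⟩ := (hp j hj).bddAbove_range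
    exact ⟨Real.log M, fun k => by
      simpa using Real.log_le_log (Real.exp_pos _) (hM ⟨k, rfl⟩)⟩
  choose! C hC using hbdd
  have hlow : ∀ k, -∑ j ∈ I.erase i, s j * C j ≤ s i * w k i := fun k => by
    have hk := hw k
    rw [← add_sum_erase I _ hi] at hk
    have : ∑ j ∈ I.erase i, s j * w k j ≤ ∑ j ∈ I.erase i, s j * C j :=
      sum_le_sum fun j hj => mul_le_mul_of_nonneg_left (hC j (mem_of_mem_erase hj) k)
        (hs j (mem_of_mem_erase hj)).le
    linarith
  refine (ge_of_tendsto' (hp i hi) fun k => (Real.exp_pos _).le).lt_of_ne' fun h0 => ?_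
  have hbot : Tendsto (fun k => s i * w k i) atTop atBot :=
    (Real.tendsto_exp_comp_nhds_zero.mp (h0 ▸ hp i hi)).const_mul_atBot (hs i hi)
  obtain ⟨k, hk⟩ := (hbot.eventually_lt_atBot _).exists
  exact (hlow k).not_gt hk

theorem IsClosed.exists_isMinOn_norm {E : Type*} [NormedAddCommGroup E] [ProperSpace E]
    {s : Set E} (hs : IsClosed s) (hne : s.Nonempty) : ∃ y ∈ s, IsMinOn norm s y := by
  obtain ⟨y, hy, hdist⟩ := hs.exists_infDist_eq_dist hne 0
  refine ⟨y, hy, fun z hz => ?_⟩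
  have := Metric.infDist_le_dist_of_mem (x := 0) hz
  rwa [hdist, dist_zero_left, dist_zero_left] at this

def expOrbit {V : Type*} [NormedAddCommGroup V] [NormedSpace ℝ V]
    (𝔞 : Submodule ℝ (V →L[ℝ] V)) (x : V) : Set V :=
  {y | ∃ ξ : 𝔞, y = exp (ξ : V →L[ℝ] V) x}

namespace OrthonormalBasis

variable {ι V : Type*} [Fintype ι] [NormedAddCommGroup V] [InnerProductSpace ℝ V]
  (v : OrthonormalBasis ι ℝ V)

/-- The index set `I` of the paper. -/
noncomputable def coordSupport (x : V) : Finset ι := {i | ⟪x, v i⟫ ≠ 0}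

@[simp]
theorem mem_coordSupport {x : V} {i : ι} : i ∈ v.coordSupport x ↔ ⟪x, v i⟫ ≠ 0 := by
  simp [coordSupport]

theorem ext_inner {y z : V} (h : ∀ i, ⟪y, v i⟫ = ⟪z, v i⟫) : y = z :=
  v.repr.injective <| by ext i; simp [v.repr_apply_apply, real_inner_comm, h]

theorem inner_apply_of_apply_eq_smul {T : V →L[ℝ] V} {c : ι → ℝ}
    (hT : ∀ i, T (v i) = c i • v i) (w : V) (i : ι) : ⟪T w, v i⟫ = c i * ⟪w, v i⟫ := by
  conv_lhs => rw [← v.sum_repr' w]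
  simp only [map_sum, map_smul, hT, smul_smul, sum_inner, real_inner_smul_left, v.inner_eq_ite]
  simp [real_inner_comm, mul_comm]

theorem inner_apply_self_of_apply_eq_smul {T : V →L[ℝ] V} {c : ι → ℝ}
    (hT : ∀ i, T (v i) = c i • v i) (w : V) : ⟪T w, w⟫ = ∑ i, c i * ⟪w, v i⟫ ^ 2 := by
  rw [← v.sum_inner_mul_inner (T w) w]
  refine sum_congr rfl fun i _ => ?_
  rw [v.inner_apply_of_apply_eq_smul hT, real_inner_comm (v i)]
  ring

end OrthonormalBasis

section Weights

variable {ι V : Type*} [Fintype ι] [NormedAddCommGroup V] [InnerProductSpace ℝ V]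
  {𝔞 : Submodule ℝ (V →L[ℝ] V)}

def IsWeightBasis (v : OrthonormalBasis ι ℝ V) (α : ι → 𝔞 →ₗ[ℝ] ℝ) : Prop :=
  ∀ (ξ : 𝔞) (i : ι), (ξ : V →L[ℝ] V) (v i) = α i ξ • v i

/-- The condition `0 ∈ C°_I` of the paper. -/
def ZeroMemOpenCone (v : OrthonormalBasis ι ℝ V) (α : ι → 𝔞 →ₗ[ℝ] ℝ) (x : V) : Prop :=
  ∃ s : ι → ℝ, (∀ i ∈ v.coordSupport x, 0 < s i) ∧
    ∀ ξ : 𝔞, ∑ i ∈ v.coordSupport x, s i * α i ξ = 0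

end Weights

section DiagonalAction

variable {ι V : Type*} [Fintype ι] [NormedAddCommGroup V] [InnerProductSpace ℝ V]
  [CompleteSpace V] (v : OrthonormalBasis ι ℝ V) {𝔞 : Submodule ℝ (V →L[ℝ] V)}
  {α : ι → 𝔞 →ₗ[ℝ] ℝ} {x : V}

theorem inner_exp_apply (heig : IsWeightBasis v α) (ξ : 𝔞) (w : V) (i : ι) :
    ⟪exp (ξ : V →L[ℝ] V) w, v i⟫ = Real.exp (α i ξ) * ⟪w, v i⟫ :=
  v.inner_apply_of_apply_eq_smul (fun j => exp_apply_eq_smul_of_apply_eq_smul (heig ξ j)) w i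

theorem mem_expOrbit_iff (heig : IsWeightBasis v α) {y : V} :
    y ∈ expOrbit 𝔞 x ↔ ∃ ξ : 𝔞, ∀ i, ⟪y, v i⟫ = Real.exp (α i ξ) * ⟪x, v i⟫ := by
  constructor
  · rintro ⟨ξ, rfl⟩
    exact ⟨ξ, inner_exp_apply v heig ξ x⟩
  · rintro ⟨ξ, hξ⟩
    exact ⟨ξ, v.ext_inner fun i => (hξ i).trans (inner_exp_apply v heig ξ x i).symm⟩

theorem exp_apply_mem_expOrbit (heig : IsWeightBasis v α) (ξ : 𝔞) {y : V}
    (hy : y ∈ expOrbit 𝔞 x) : exp (ξ : V →L[ℝ] V) y ∈ expOrbit 𝔞 x := by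
  obtain ⟨η, hη⟩ := (mem_expOrbit_iff v heig).mp hy
  refine (mem_expOrbit_iff v heig).mpr ⟨ξ + η, fun i => ?_⟩
  rw [inner_exp_apply v heig, hη, map_add, Real.exp_add, mul_assoc]

theorem inner_apply_self_eq_zero_of_isMinOn
    (heig : IsWeightBasis v α) {y : V}
    (hy : y ∈ expOrbit 𝔞 x) (hmin : IsMinOn norm (expOrbit 𝔞 x) y) (ξ : 𝔞) :
    ⟪(ξ : V →L[ℝ] V) y, y⟫ = 0 := by
  have hnorm : ∀ t : ℝ, ‖exp ((t • ξ : 𝔞) : V →L[ℝ] V) y‖ ^ 2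
      = ∑ i, (Real.exp (t * α i ξ) * ⟪y, v i⟫) ^ 2 := fun t => by
    rw [← v.sum_sq_inner_left]
    simp only [inner_exp_apply v heig, map_smul, smul_eq_mul]
  have hlocal : IsLocalMin (fun t => ∑ i, (Real.exp (t * α i ξ) * ⟪y, v i⟫) ^ 2) 0 :=
    Eventually.of_forall fun t => by
      simp only [← hnorm, zero_smul, ZeroMemClass.coe_zero, exp_zero]
      gcongr
      exact hmin (exp_apply_mem_expOrbit v heig _ hy)
  have hderiv := hlocal.hasDerivAt_eq_zero (hasDerivAt_sum_sq_exp_mul _ _)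
  rw [v.inner_apply_self_of_apply_eq_smul (heig ξ)]
  linarith

theorem zeroMemOpenCone_of_inner_apply_self_eq_zero (heig : IsWeightBasis v α) {y : V}
    (hy : y ∈ expOrbit 𝔞 x) (hcrit : ∀ ξ : 𝔞, ⟪(ξ : V →L[ℝ] V) y, y⟫ = 0) :
    ZeroMemOpenCone v α x := by
  obtain ⟨η, hη⟩ := (mem_expOrbit_iff v heig).mp hy
  refine ⟨fun i => ⟪y, v i⟫ ^ 2, fun i hi => ?_, fun ξ => ?_⟩
  · have hxi := v.mem_coordSupport.mp hi
    show 0 < ⟪y, v i⟫ ^ 2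
    rw [hη]
    positivity
  · rw [← hcrit ξ, v.inner_apply_self_of_apply_eq_smul (heig ξ)]
    refine (sum_subset (subset_univ _) fun i _ hi => ?_).trans
      (sum_congr rfl fun i _ => mul_comm _ _)
    simp_all

theorem mem_expOrbit_of_tendsto (heig : IsWeightBasis v α) (hcone : ZeroMemOpenCone v α x)
    {ξ : ℕ → 𝔞} {y : V} (hy : Tendsto (fun k => exp (ξ k : V →L[ℝ] V) x) atTop (𝓝 y)) :
    y ∈ expOrbit 𝔞 x := by
  obtain ⟨s, hs, hsum⟩ := hcone
  set I := v.coordSupport x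
  have hcoord : ∀ i, Tendsto (fun k => Real.exp (α i (ξ k)) * ⟪x, v i⟫) atTop (𝓝 ⟪y, v i⟫) :=
    fun i => by
      simpa only [inner_exp_apply v heig] using
        hy.inner (𝕜 := ℝ) (tendsto_const_nhds (x := v i))
  have hexp : ∀ i ∈ I,
      Tendsto (fun k => Real.exp (α i (ξ k))) atTop (𝓝 (⟪y, v i⟫ / ⟪x, v i⟫)) := fun i hi => by
    simpa [mul_div_assoc, div_self (v.mem_coordSupport.mp hi)] using
      (hcoord i).div_const ⟪x, v i⟫
  have hpos : ∀ i ∈ I, 0 < ⟪y, v i⟫ / ⟪x, v i⟫ := fun i hi =>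
    Real.pos_of_tendsto_exp_of_sum_mul_eq_zero hs (fun k => hsum (ξ k)) hexp hi
  let L : 𝔞 →ₗ[ℝ] (I → ℝ) := LinearMap.pi fun i => α i
  have hL : Tendsto (fun k => L (ξ k)) atTop (𝓝 fun i => Real.log (⟪y, v i⟫ / ⟪x, v i⟫)) :=
    tendsto_pi_nhds.mpr fun i => by
      simpa [L, Function.comp_def] using
        (Real.continuousAt_log (hpos i i.2).ne').tendsto.comp (hexp i i.2)
  have : FiniteDimensional ℝ (LinearMap.range L) := FiniteDimensional.finiteDimensional_submodule _
  obtain ⟨η, hη⟩ := (LinearMap.range L).closed_of_finiteDimensional.mem_of_tendsto hL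
    (Eventually.of_forall fun k => ⟨ξ k, rfl⟩)
  refine (mem_expOrbit_iff v heig).mpr ⟨η, fun i => ?_⟩
  by_cases hi : i ∈ I
  · have hηi : α i η = Real.log (⟪y, v i⟫ / ⟪x, v i⟫) := congr_fun hη ⟨i, hi⟩
    rw [hηi, Real.exp_log (hpos i hi), div_mul_cancel₀ _ (v.mem_coordSupport.mp hi)]
  · have hx : ⟪x, v i⟫ = 0 := by simpa [I] using hi
    rw [hx, mul_zero]
    exact tendsto_nhds_unique (hcoord i) (by simp [hx])

theorem isClosed_expOrbit (heig : IsWeightBasis v α) (hcone : ZeroMemOpenCone v α x) :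
    IsClosed (expOrbit 𝔞 x) :=
  IsSeqClosed.isClosed fun u y hu hy => by
    choose ξ hξ using hu
    obtain rfl : u = fun k => exp (ξ k : V →L[ℝ] V) x := funext hξ
    exact mem_expOrbit_of_tendsto v heig hcone hy

end DiagonalAction

theorem orbit_closed_iff_general
    (V : Type*) [NormedAddCommGroup V] [InnerProductSpace ℝ V]
    (n : ℕ) (𝔞 : Submodule ℝ (V →L[ℝ] V))
    (v : OrthonormalBasis (Fin n) ℝ V) (α : Fin n → (𝔞 →ₗ[ℝ] ℝ))
    (heig : ∀ (ξ : 𝔞) (i : Fin n), (ξ : V →L[ℝ] V) (v i) = α i ξ • v i)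
    (x : V)
    (orbit : Set V)
    (horbit : orbit = {y : V | ∃ ξ : 𝔞, y = NormedSpace.exp (ξ : V →L[ℝ] V) x}) :
    (IsClosed orbit ↔
      (0 : 𝔞 →ₗ[ℝ] ℝ) ∈ {φ : 𝔞 →ₗ[ℝ] ℝ | ∃ s : Fin n → ℝ, (∀ i, ⟪x, v i⟫ ≠ 0 → 0 < s i) ∧
        ∀ ξ : 𝔞, φ ξ = ∑ i, (if ⟪x, v i⟫ ≠ 0 then s i * α i ξ else 0)}) ∧
    (IsClosed orbit ↔ ∃ y ∈ orbit, ∀ ξ : 𝔞, ⟪(ξ : V →L[ℝ] V) y, y⟫ = 0) := by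
  have : FiniteDimensional ℝ V := v.toBasis.finiteDimensional_of_finite
  change orbit = expOrbit 𝔞 x at horbit
  subst horbit
  have hcone : (0 : 𝔞 →ₗ[ℝ] ℝ) ∈ {φ : 𝔞 →ₗ[ℝ] ℝ | ∃ s : Fin n → ℝ,
      (∀ i, ⟪x, v i⟫ ≠ 0 → 0 < s i) ∧
        ∀ ξ : 𝔞, φ ξ = ∑ i, (if ⟪x, v i⟫ ≠ 0 then s i * α i ξ else 0)} ↔
      ZeroMemOpenCone v α x := by
    simp [ZeroMemOpenCone, OrthonormalBasis.coordSupport, sum_filter, eq_comm]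
  have hclosed_crit : IsClosed (expOrbit 𝔞 x) →
      ∃ y ∈ expOrbit 𝔞 x, ∀ ξ : 𝔞, ⟪(ξ : V →L[ℝ] V) y, y⟫ = 0 := fun hclosed => by
    obtain ⟨y, hy, hmin⟩ := hclosed.exists_isMinOn_norm ⟨x, 0, by simp⟩
    exact ⟨y, hy, inner_apply_self_eq_zero_of_isMinOn v heig hy hmin⟩
  have hcrit_cone : (∃ y ∈ expOrbit 𝔞 x, ∀ ξ : 𝔞, ⟪(ξ : V →L[ℝ] V) y, y⟫ = 0) →
      ZeroMemOpenCone v α x := fun ⟨y, hy, hcrit⟩ =>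
    zeroMemOpenCone_of_inner_apply_self_eq_zero v heig hy hcrit
  rw [hcone]
  exact ⟨⟨hcrit_cone ∘ hclosed_crit, isClosed_expOrbit v heig⟩,
    ⟨hclosed_crit, isClosed_expOrbit v heig ∘ hcrit_cone⟩⟩

/-- The orbit `A·x` is closed if and only if `0 ∈ C^o_I` (strictly positive combinations of the
weights on the support of `x`), and equivalently if and only if the orbit meets the zero set of
the gradient map `μ_𝔞`. -/
theorem orbit_closed_iff
    (V : Type*) [NormedAddCommGroup V] [InnerProductSpace ℝ V] [FiniteDimensional ℝ V]
    (n : ℕ) (𝔞 : Submodule ℝ (V →L[ℝ] V))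
    (habelian : ∀ ξ η : 𝔞, (ξ : V →L[ℝ] V) * η = (η : V →L[ℝ] V) * ξ)
    (v : OrthonormalBasis (Fin n) ℝ V) (α : Fin n → (𝔞 →ₗ[ℝ] ℝ))
    (heig : ∀ (ξ : 𝔞) (i : Fin n), (ξ : V →L[ℝ] V) (v i) = α i ξ • v i)
    (x : V)
    (orbit : Set V)
    (horbit : orbit = {y : V | ∃ ξ : 𝔞, y = NormedSpace.exp (ξ : V →L[ℝ] V) x}) :
    (IsClosed orbit ↔
      (0 : 𝔞 →ₗ[ℝ] ℝ) ∈ {φ : 𝔞 →ₗ[ℝ] ℝ | ∃ s : Fin n → ℝ, (∀ i, ⟪x, v i⟫ ≠ 0 → 0 < s i) ∧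
        ∀ ξ : 𝔞, φ ξ = ∑ i, (if ⟪x, v i⟫ ≠ 0 then s i * α i ξ else 0)}) ∧
    (IsClosed orbit ↔ ∃ y ∈ orbit, ∀ ξ : 𝔞, ⟪(ξ : V →L[ℝ] V) y, y⟫ = 0) :=
  orbit_closed_iff_general V n 𝔞 v α heig x orbit horbit
end
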